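/- Assume (G0), (G1), (G4), (G5), z̄ < +∞, and let μ be a Borel probability measure on X with μ ≪ L^m. Define Π̃(u,y) := ∫_X π(x, y(x), H(x, y(x), u(x))) dμ(x). Then the maximum of Π̃(u,y) over all G-convex functions u : X → ℝ with u ≥ u_∅ and all measurable selections y(x) ∈ ∂^G u(x) (x ∈ X) is attained; moreover, for each such u the selection y(x) is uniquely determined for Lebesgue-almost every x ∈ X. -/

import Mathlib

/-!
Common framework for "The principal-agent problem: convexity/concavity of the
principal's problem" (McCann–Zhang).

Agent types live in `X ⊆ ℝ^m`, product types in `Y ⊆ ℝ^n`, prices in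
`Z = (z̲, z̄) ⊆ ℝ` with `z̲` finite and `z̄ ∈ (z̲, +∞]` (an `EReal`).
The direct utility is `G(x,y,z)` and the principal's profit density `π(x,y,z)`.
-/

open Set MeasureTheory Filter Topology

noncomputable section

namespace PrincipalAgent

/-- Euclidean space `ℝ^k`. -/
abbrev E (k : ℕ) : Type := EuclideanSpace ℝ (Fin k)

variable {m n : ℕ}

/-- The open price interval `(z̲, z̄)`, with `z̄` possibly `+∞`. -/
def priceSet (zl : ℝ) (zu : EReal) : Set ℝ := {z : ℝ | zl < z ∧ (z : EReal) < zu}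

/-- The filter of `z → z̄` from the left (from within `Z`); when `z̄ = +∞`
this is `atTop`. -/
def zFilter (zu : EReal) : Filter ℝ :=
  Filter.comap (fun z : ℝ => (z : EReal)) (𝓝[<] zu)

/-- `G_x`, the gradient of `G` in the agent variable. -/
def Gx (G : E m → E n → ℝ → ℝ) (x : E m) (y : E n) (z : ℝ) : E m :=
  gradient (fun x' => G x' y z) x

/-- `G_z`, the partial derivative of `G` in the price variable. -/
def Gz (G : E m → E n → ℝ → ℝ) (x : E m) (y : E n) (z : ℝ) : ℝ :=
  deriv (fun z' => G x y z') z

/-- The map `(y,z) ↦ (G_x, G)(x,y,z) ∈ ℝ^m × ℝ ≅ ℝ^{m+1}`. -/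
def Phi (G : E m → E n → ℝ → ℝ) (x : E m) (p : E n × ℝ) : E m × ℝ :=
  (Gx G x p.1 p.2, G x p.1 p.2)

/-- `u : X → ℝ` is `G`-convex (Definition 3.2). -/
def GConvex (X : Set (E m)) (Y : Set (E n)) (Z : Set ℝ)
    (G : E m → E n → ℝ → ℝ) (u : E m → ℝ) : Prop :=
  ∀ x₀ ∈ X, ∃ y₀ ∈ closure Y, ∃ z₀ ∈ closure Z,
    u x₀ = G x₀ y₀ z₀ ∧ ∀ x ∈ X, G x y₀ z₀ ≤ u x

/-- The `G`-subdifferential `∂^G u(x)` of `u` at `x` (Definition 3.3).  Under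
(G4), `z ↦ G(x,y,z)` is injective on `cl Z`, so the price `z` appearing below
is exactly `H(x,y,u(x))`, the unique price at which product `y` brings agent
`x` the utility `u(x)`. -/
def GSubdiff (X : Set (E m)) (Y : Set (E n)) (Z : Set ℝ)
    (G : E m → E n → ℝ → ℝ) (u : E m → ℝ) (x : E m) : Set (E n) :=
  {y | y ∈ closure Y ∧ ∃ z ∈ closure Z, G x y z = u x ∧ ∀ x' ∈ X, G x' y z ≤ u x'}

/-- The `G`-segment (2.1) at `x₀`: a curve `γ = (y_t, z_t)` in `cl(Y × Z)`
on which `(G_x, G)(x₀, ·, ·)` is affinely interpolated between its endpoint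
values. -/
def IsGSegment (Y : Set (E n)) (Z : Set ℝ) (G : E m → E n → ℝ → ℝ)
    (x₀ : E m) (γ : ℝ → E n × ℝ) : Prop :=
  (∀ t ∈ Icc (0:ℝ) 1, γ t ∈ closure Y ×ˢ closure Z) ∧
  ∀ t ∈ Icc (0:ℝ) 1,
    Phi G x₀ (γ t) = (1 - t) • Phi G x₀ (γ 0) + t • Phi G x₀ (γ 1)

/-- (G0): `G ∈ C¹(cl(X × Y × Z))`. -/
def CondG0 (X : Set (E m)) (Y : Set (E n)) (Z : Set ℝ)
    (G : E m → E n → ℝ → ℝ) : Prop :=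
  ContDiffOn ℝ 1 (fun p : E m × E n × ℝ => G p.1 p.2.1 p.2.2)
    (closure X ×ˢ (closure Y ×ˢ closure Z))

/-- (G1): for each `x ∈ X`, the map `(y,z) ∈ cl(Y × Z) ↦ (G_x, G)(x,y,z)` is a
homeomorphism onto its range (continuous, injective, with continuous inverse). -/
def CondG1 (X : Set (E m)) (Y : Set (E n)) (Z : Set ℝ)
    (G : E m → E n → ℝ → ℝ) : Prop :=
  ∀ x ∈ X, ContinuousOn (Phi G x) (closure Y ×ˢ closure Z) ∧
    InjOn (Phi G x) (closure Y ×ˢ closure Z) ∧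
    ∃ ψ : E m × ℝ → E n × ℝ,
      ContinuousOn ψ (Phi G x '' (closure Y ×ˢ closure Z)) ∧
      ∀ p ∈ closure Y ×ˢ closure Z, ψ (Phi G x p) = p

/-- (G2): the range `(G_x,G)(x, cl(Y × Z))` is convex. -/
def CondG2 (X : Set (E m)) (Y : Set (E n)) (Z : Set ℝ)
    (G : E m → E n → ℝ → ℝ) : Prop :=
  ∀ x ∈ X, Convex ℝ (Phi G x '' (closure Y ×ˢ closure Z))

/-- (G3): `t ↦ G(x, y_t, z_t)` is convex along every `G`-segment. -/
def CondG3 (X : Set (E m)) (Y : Set (E n)) (Z : Set ℝ)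
    (G : E m → E n → ℝ → ℝ) : Prop :=
  ∀ x ∈ X, ∀ x₀ ∈ X, ∀ γ : ℝ → E n × ℝ, IsGSegment Y Z G x₀ γ →
    ConvexOn ℝ (Icc (0:ℝ) 1) (fun t => G x (γ t).1 (γ t).2)

/-- (G4): `G_z < 0` on `X × cl Y × cl Z`. -/
def CondG4 (X : Set (E m)) (Y : Set (E n)) (Z : Set ℝ)
    (G : E m → E n → ℝ → ℝ) : Prop :=
  ∀ x ∈ X, ∀ y ∈ closure Y, ∀ z ∈ closure Z, Gz G x y z < 0

/-- (G5): `π ∈ C⁰(cl(X × Y × Z))`; `(y₀, z₀) = (y_∅, z_∅)` lies in `cl(Y × Z)`;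
`Gbar x y = G(x,y,z̄) := lim_{z→z̄} G(x,y,z)` satisfies `Gbar x y ≤ G(x,y_∅,z_∅)`,
strictly when `z̄ = +∞`, in which case also `G(x,y,z) < G(x,y_∅,z_∅)` for all
sufficiently large `z`. -/
def CondG5 (X : Set (E m)) (Y : Set (E n)) (Z : Set ℝ) (zu : EReal)
    (G : E m → E n → ℝ → ℝ) (π : E m → E n → ℝ → ℝ)
    (Gbar : E m → E n → ℝ) (y0 : E n) (z0 : ℝ) : Prop :=
  ContinuousOn (fun p : E m × E n × ℝ => π p.1 p.2.1 p.2.2)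
    (closure X ×ˢ (closure Y ×ˢ closure Z)) ∧
  y0 ∈ closure Y ∧ z0 ∈ closure Z ∧
  (∀ x ∈ X, ∀ y ∈ closure Y,
    Tendsto (fun z : ℝ => G x y z) (zFilter zu) (𝓝 (Gbar x y)) ∧
    Gbar x y ≤ G x y0 z0) ∧
  (zu = ⊤ → (∀ x ∈ X, ∀ y ∈ closure Y, Gbar x y < G x y0 z0) ∧
    ∃ zbig : ℝ, ∀ z : ℝ, zbig ≤ z → ∀ x ∈ X, ∀ y ∈ closure Y, G x y z < G x y0 z0)

/-- (G6): `G ∈ C²(cl(X×Y×Z))` and the `(m+1)×(n+1)` matrix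
`D_x̄ D_ȳ Ḡ(x,-1,y,z)` (where `Ḡ((x,x₀),(y,z)) = x₀ G(x,y,z)`) has full rank
`n+1`; equivalently the linear map `v ↦ (D_x(D_ȳG · v), D_ȳG · v)` is injective. -/
def CondG6 (X : Set (E m)) (Y : Set (E n)) (Z : Set ℝ)
    (G : E m → E n → ℝ → ℝ) : Prop :=
  ContDiffOn ℝ 2 (fun p : E m × E n × ℝ => G p.1 p.2.1 p.2.2)
    (closure X ×ˢ (closure Y ×ˢ closure Z)) ∧
  ∀ x ∈ closure X, ∀ y ∈ closure Y, ∀ z ∈ closure Z,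
    Function.Injective (fun v : E n × ℝ =>
      ((fderiv ℝ (fun x' : E m =>
          (fderiv ℝ (fun q : E n × ℝ => G x' q.1 q.2) (y, z)) v) x : E m →L[ℝ] ℝ),
       (fderiv ℝ (fun q : E n × ℝ => G x q.1 q.2) (y, z)) v))

/-- The map `x ↦ (G_y/G_z)(x,y,z)`. -/
def Ratio (G : E m → E n → ℝ → ℝ) (x : E m) (y : E n) (z : ℝ) : E n :=
  (Gz G x y z)⁻¹ • gradient (fun y' => G x y' z) y

/-- (G7): `x ↦ (G_y/G_z)(x,y,z)` is one-to-one on `X`. -/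
def CondG7 (X : Set (E m)) (Y : Set (E n)) (Z : Set ℝ)
    (G : E m → E n → ℝ → ℝ) : Prop :=
  ∀ y ∈ closure Y, ∀ z ∈ closure Z, InjOn (fun x => Ratio G x y z) X

/-- (G8): the range `(G_y/G_z)(X,y,z)` is convex. -/
def CondG8 (X : Set (E m)) (Y : Set (E n)) (Z : Set ℝ)
    (G : E m → E n → ℝ → ℝ) : Prop :=
  ∀ y ∈ closure Y, ∀ z ∈ closure Z, Convex ℝ ((fun x => Ratio G x y z) '' X)

/-- `ȳ_G` solves (3.2): for `u` `G`-convex and `x ∈ dom Du`,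
`ȳ_G(x, u(x), Du(x))` is the unique `(y,z) ∈ cl(Y×Z)` with `u(x) = G(x,y,z)`
and `Du(x) = G_x(x,y,z)`.  We record the defining inverse property, together
with continuity (which holds under (G0)–(G1)). -/
def IsYbar (X : Set (E m)) (Y : Set (E n)) (Z : Set ℝ)
    (G : E m → E n → ℝ → ℝ) (ybar : E m → ℝ → E m → E n × ℝ) : Prop :=
  (∀ x ∈ X, ∀ y ∈ closure Y, ∀ z ∈ closure Z,
    ybar x (G x y z) (Gx G x y z) = (y, z)) ∧
  ContinuousOn (fun p : E m × ℝ × E m => ybar p.1 p.2.1 p.2.2)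
    {p : E m × ℝ × E m | ∃ x ∈ X, ∃ y ∈ closure Y, ∃ z ∈ closure Z,
      p = (x, G x y z, Gx G x y z)}

/-- A Borel probability measure on `X`, absolutely continuous with respect to
`m`-dimensional Lebesgue measure. -/
def AdmissibleMeasure (X : Set (E m)) (μ : Measure (E m)) : Prop :=
  IsProbabilityMeasure μ ∧ μ ≪ (volume : Measure (E m)) ∧ μ Xᶜ = 0

/-- The principal's profit functional
`𝚷(u) = ∫_X π(x, ȳ_G(x, u(x), Du(x))) dμ(x)`. -/
def Profit (X : Set (E m)) (π : E m → E n → ℝ → ℝ)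
    (ybar : E m → ℝ → E m → E n × ℝ) (μ : Measure (E m)) (u : E m → ℝ) : ℝ :=
  ∫ x in X, π x (ybar x (u x) (gradient u x)).1 (ybar x (u x) (gradient u x)).2 ∂μ

/-- The squared `W^{1,2}(X,dμ)`-distance `‖u₁ - u₀‖²_{W^{1,2}(X,dμ)}`. -/
def WDistSq (X : Set (E m)) (μ : Measure (E m)) (u₀ u₁ : E m → ℝ) : ℝ :=
  ∫ x in X, ((u₁ x - u₀ x) ^ 2 + ‖gradient u₁ x - gradient u₀ x‖ ^ 2) ∂μ

/-- `u₀ = u₁` as elements of `W^{1,2}(X, dμ)`. -/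
def WEq (X : Set (E m)) (μ : Measure (E m)) (u₀ u₁ : E m → ℝ) : Prop :=
  ∀ᵐ x ∂(μ.restrict X), u₀ x = u₁ x ∧ gradient u₀ x = gradient u₁ x

end PrincipalAgent

/-!
Recast the principal's problem over contracts `ξ = (y, z)`, assigning product–price pairs to the
agents in an incentive compatible and individually rational way; the agents' indirect utility
`u = G(·, ξ ·)` is then `G`-convex, hence locally Lipschitz. Along a maximizing sequence of
contracts the utilities are bounded and uniformly equicontinuous, so a subsequence converges
pointwise to some `u`, and any cluster point of the items chosen by agent `x` supports `u` at `x`. Wherever `u` is differentiable, hence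
almost everywhere by Rademacher's theorem, the twist condition (G1) makes this support the unique
one with `(G_x, G) = (Du, u)`; so the items converge almost everywhere and dominated convergence
shows that the limit contract is optimal. A competitor `(u, y)` is itself a contract once its prices
`H(x, y, u)` are known to be measurable, which follows from (G4). The same uniqueness of supports
gives the almost-everywhere uniqueness of `y`.
-/

lemma ContinuousOn.aemeasurable_comp {α β γ : Type*} [MeasurableSpace α] [TopologicalSpace β]
    [MeasurableSpace β] [OpensMeasurableSpace β] [TopologicalSpace γ] [MeasurableSpace γ]
    [BorelSpace γ] {μ : Measure α} {f : β → γ} {s : Set β} (hf : ContinuousOn f s)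
    (hs : MeasurableSet s) {φ : α → β} (hφ : AEMeasurable φ μ) (hφs : ∀ᵐ x ∂μ, φ x ∈ s) :
    AEMeasurable (fun x => f (φ x)) μ := by
  have hf' : AEMeasurable f ((μ.map φ).restrict s) := hf.aemeasurable hs
  rw [Measure.restrict_eq_self_of_ae_mem ((ae_map_iff hφ hs).2 hφs)] at hf'
  exact hf'.comp_aemeasurable hφ

/-- Up to a null set, `{c < z} = {v < F · c}`. -/
lemma aemeasurable_of_strictAntiOn_eq {α : Type*} [MeasurableSpace α] {μ : Measure α}
    {a b : ℝ} {F : α → ℝ → ℝ} (hF : ∀ c ∈ Icc a b, AEMeasurable (fun x => F x c) μ)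
    {v z : α → ℝ} (hv : AEMeasurable v μ)
    (h : ∀ᵐ x ∂μ, StrictAntiOn (F x) (Icc a b) ∧ z x ∈ Icc a b ∧ F x (z x) = v x) :
    AEMeasurable z μ := by
  refine NullMeasurable.aemeasurable (measurable_of_Ioi (δ := NullMeasurableSpace α μ) fun c => ?_)
  change NullMeasurableSet (z ⁻¹' Ioi c) μ
  rcases lt_or_ge c a with hca | hac
  · refine nullMeasurableSet_univ.congr (Filter.eventuallyEq_set.2 ?_)
    filter_upwards [h] with x hx
    simpa using hca.trans_le hx.2.1.1
  rcases le_or_gt b c with hbc | hcb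
  · refine nullMeasurableSet_empty.congr (Filter.eventuallyEq_set.2 ?_)
    filter_upwards [h] with x hx
    simpa using hx.2.1.2.trans hbc
  · have hc : c ∈ Icc a b := ⟨hac, hcb.le⟩
    refine (nullMeasurableSet_lt hv (hF c hc)).congr (Filter.eventuallyEq_set.2 ?_)
    filter_upwards [h] with x ⟨hanti, hz, hFz⟩
    simpa [← hFz] using hanti.lt_iff_gt hz hc

section Slices

variable {V P : Type*} [NormedAddCommGroup V] [NormedSpace ℝ V] [NormedAddCommGroup P]
  [NormedSpace ℝ P] {X : Set V} {W : Set P} {g : V × P → ℝ}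

lemma ContDiffOn.exists_hasFDerivAt_slice (hX : IsOpen X) (hg : ContDiffOn ℝ 1 g (X ×ˢ W))
    {q : V × P} (hq : q ∈ X ×ˢ W) :
    ∃ f' : V × P → V →L[ℝ] ℝ, ContinuousWithinAt f' (X ×ˢ W) q ∧
      ∀ᶠ z in 𝓝[X ×ˢ W] q, HasFDerivAt (fun x => g (x, z.2)) (f' z) z.1 := by
  let L : (V × P) × V →L[ℝ] V × P :=
    (ContinuousLinearMap.snd ℝ (V × P) V).prod
      ((ContinuousLinearMap.snd ℝ V P).comp (ContinuousLinearMap.fst ℝ (V × P) V))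
  have hmaps : MapsTo L (insert q (X ×ˢ W) ×ˢ X) (X ×ˢ W) := by
    rintro ⟨z, x⟩ ⟨hz, hx⟩
    rw [insert_eq_of_mem hq] at hz
    exact ⟨hx, hz.2⟩
  have hcomp : ContDiffWithinAt ℝ (0 + 1) (fun w : (V × P) × V => g (w.2, w.1.2))
      (insert q (X ×ˢ W) ×ˢ X) (q, q.1) :=
    (hg.contDiffWithinAt hq).comp (q, q.1) L.contDiff.contDiffWithinAt hmaps
  obtain ⟨v, hv, -, f', hf', hf'c⟩ := hcomp.hasFDerivWithinAt_nhds (f := fun z x => g (x, z.2))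
    (g := Prod.fst) (by simp) contDiffWithinAt_fst
    (mem_nhdsWithin_of_mem_nhds (hX.mem_nhds hq.1))
  rw [insert_eq_of_mem hq] at hv
  refine ⟨f', hf'c.continuousWithinAt, ?_⟩
  filter_upwards [hv, self_mem_nhdsWithin] with z hzv hz
  exact (hf' z hzv).hasFDerivAt (hX.mem_nhds hz.1)

lemma ContDiffOn.differentiableAt_slice (hX : IsOpen X) (hg : ContDiffOn ℝ 1 g (X ×ˢ W))
    {x : V} {p : P} (hx : x ∈ X) (hp : p ∈ W) : DifferentiableAt ℝ (fun x' => g (x', p)) x := by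
  obtain ⟨f', -, hf'⟩ := hg.exists_hasFDerivAt_slice hX (q := (x, p)) ⟨hx, hp⟩
  exact (hf'.self_of_nhdsWithin ⟨hx, hp⟩).differentiableAt

lemma ContDiffOn.continuousOn_fderiv_slice (hX : IsOpen X) (hg : ContDiffOn ℝ 1 g (X ×ˢ W)) :
    ContinuousOn (fun q : V × P => fderiv ℝ (fun x => g (x, q.2)) q.1) (X ×ˢ W) := by
  intro q hq
  obtain ⟨f', hf'c, hf'⟩ := hg.exists_hasFDerivAt_slice hX hq
  refine hf'c.congr_of_eventuallyEq (hf'.mono fun z hz => hz.fderiv)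
    (hf'.self_of_nhdsWithin hq).fderiv

lemma ContDiffOn.exists_lipschitzOnWith_slice [ProperSpace V] (hX : IsOpen X)
    (hW : IsCompact W) (hg : ContDiffOn ℝ 1 g (X ×ˢ W)) {x₀ : V} (hx₀ : x₀ ∈ X) :
    ∃ r > 0, Metric.closedBall x₀ r ⊆ X ∧
      ∃ C, ∀ p ∈ W, LipschitzOnWith C (fun x => g (x, p)) (Metric.closedBall x₀ r) := by
  obtain ⟨r, hr, hrX⟩ := Metric.nhds_basis_closedBall.mem_iff.1 (hX.mem_nhds hx₀)
  have hK : Metric.closedBall x₀ r ×ˢ W ⊆ X ×ˢ W := prod_mono hrX subset_rfl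
  obtain ⟨C, hC⟩ := ((isCompact_closedBall x₀ r).prod hW).exists_bound_of_continuousOn
    ((hg.continuousOn_fderiv_slice hX).mono hK)
  refine ⟨r, hr, hrX, C.toNNReal, fun p hp => ?_⟩
  refine (convex_closedBall x₀ r).lipschitzOnWith_of_nnnorm_fderiv_le
    (fun x hx => hg.differentiableAt_slice hX (hrX hx) hp) (fun x hx => ?_)
  rw [← NNReal.coe_le_coe, coe_nnnorm]
  exact (hC (x, p) ⟨hx, hp⟩).trans (Real.le_coe_toNNReal C)

end Slices

lemma LocallyLipschitzOn.ae_differentiableAt {V : Type*} [NormedAddCommGroup V]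
    [NormedSpace ℝ V] [FiniteDimensional ℝ V] [MeasurableSpace V] [BorelSpace V]
    {μ : Measure V} [μ.IsAddHaarMeasure] {X : Set V} {f : V → ℝ} (hX : IsOpen X)
    (hf : LocallyLipschitzOn X f) : ∀ᵐ x ∂μ, x ∈ X → DifferentiableAt ℝ f x := by
  have hloc : ∀ x ∈ X, ∃ K, ∃ t, IsOpen t ∧ x ∈ t ∧ LipschitzOnWith K f t := by
    intro x hx
    obtain ⟨K, t, ht, hft⟩ := hf hx
    rw [hX.nhdsWithin_eq hx] at ht
    exact ⟨K, interior t, isOpen_interior, mem_interior_iff_mem_nhds.2 ht,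
      hft.mono interior_subset⟩
  choose! K t hto hxt hft using hloc
  obtain ⟨S, hSX, hSc, hXS⟩ := TopologicalSpace.countable_cover_nhdsWithin
    fun x hx => mem_nhdsWithin_of_mem_nhds ((hto x hx).mem_nhds (hxt x hx))
  have hS : ∀ᵐ y ∂μ, ∀ x ∈ S, y ∈ t x → DifferentiableAt ℝ f y := by
    refine (ae_ball_iff hSc).2 fun x hx => ?_
    filter_upwards [(hft x (hSX hx)).ae_differentiableWithinAt_of_mem] with y hy hyt
    exact (hy hyt).differentiableAt ((hto x (hSX hx)).mem_nhds hyt)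
  filter_upwards [hS] with y hy hyX
  obtain ⟨x, hxS, hyx⟩ := mem_iUnion₂.1 (hXS hyX)
  exact hy x hxS hyx

section Supports

variable {V P : Type*} [NormedAddCommGroup V] [NormedSpace ℝ V] {X : Set V} {W : Set P}
  {g : V × P → ℝ} {u : V → ℝ}

def IsGSupport (g : V × P → ℝ) (X : Set V) (u : V → ℝ) (x : V) (p : P) : Prop :=
  g (x, p) = u x ∧ ∀ x' ∈ X, g (x', p) ≤ u x'

/-- The abstract form of (G1). -/
def IsTwisted (g : V × P → ℝ) (X : Set V) (W : Set P) : Prop :=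
  ∀ x ∈ X, InjOn (fun p => (fderiv ℝ (fun x' => g (x', p)) x, g (x, p))) W

lemma locallyLipschitzOn_of_forall_isGSupport [NormedAddCommGroup P] [NormedSpace ℝ P]
    [ProperSpace V] (hX : IsOpen X) (hW : IsCompact W) (hg : ContDiffOn ℝ 1 g (X ×ˢ W))
    (hu : ∀ x ∈ X, ∃ p ∈ W, IsGSupport g X u x p) : LocallyLipschitzOn X u := by
  intro x₀ hx₀
  obtain ⟨r, hr, hrX, C, hC⟩ := hg.exists_lipschitzOnWith_slice hX hW hx₀
  refine ⟨C, Metric.closedBall x₀ r,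
    mem_nhdsWithin_of_mem_nhds (Metric.closedBall_mem_nhds x₀ hr),
    LipschitzOnWith.of_le_add_mul C fun a ha b hb => ?_⟩
  obtain ⟨p, hp, hpa, hpu⟩ := hu a (hrX ha)
  calc u a = g (a, p) := hpa.symm
    _ ≤ g (b, p) + C * dist a b := (hC p hp).le_add_mul ha hb
    _ ≤ u b + C * dist a b := by gcongr; exact hpu b (hrX hb)

lemma IsGSupport.fderiv_eq (hX : IsOpen X) {x : V} {p : P} (hx : x ∈ X)
    (h : IsGSupport g X u x p) (hu : DifferentiableAt ℝ u x)
    (hgx : DifferentiableAt ℝ (fun x' => g (x', p)) x) :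
    fderiv ℝ (fun x' => g (x', p)) x = fderiv ℝ u x := by
  have hmin : IsLocalMin (fun x' => u x' - g (x', p)) x := by
    filter_upwards [hX.mem_nhds hx] with x' hx'
    linarith [h.1, h.2 x' hx']
  have hzero := hmin.fderiv_eq_zero
  rw [fderiv_fun_sub hu hgx, sub_eq_zero] at hzero
  exact hzero.symm

lemma IsTwisted.eq_of_isGSupport [NormedAddCommGroup P] [NormedSpace ℝ P]
    (htw : IsTwisted g X W) (hX : IsOpen X) (hg : ContDiffOn ℝ 1 g (X ×ˢ W)) {x : V}
    (hx : x ∈ X) (hu : DifferentiableAt ℝ u x)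
    {p q : P} (hp : p ∈ W) (hq : q ∈ W) (hpu : IsGSupport g X u x p)
    (hqu : IsGSupport g X u x q) : p = q :=
  htw x hx hp hq <| Prod.ext
    ((hpu.fderiv_eq hX hx hu (hg.differentiableAt_slice hX hx hp)).trans
      (hqu.fderiv_eq hX hx hu (hg.differentiableAt_slice hX hx hq)).symm)
    (hpu.1.trans hqu.1.symm)

theorem IsTwisted.ae_eq_of_isGSupport [NormedAddCommGroup P] [NormedSpace ℝ P]
    [FiniteDimensional ℝ V] [MeasurableSpace V] [BorelSpace V] {μ : Measure V}
    [μ.IsAddHaarMeasure] (htw : IsTwisted g X W)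
    (hX : IsOpen X) (hW : IsCompact W) (hg : ContDiffOn ℝ 1 g (X ×ˢ W))
    (hu : ∀ x ∈ X, ∃ p ∈ W, IsGSupport g X u x p) :
    ∀ᵐ x ∂μ, x ∈ X → ∀ p ∈ W, ∀ q ∈ W, IsGSupport g X u x p → IsGSupport g X u x q → p = q := by
  filter_upwards [(locallyLipschitzOn_of_forall_isGSupport hX hW hg hu).ae_differentiableAt hX]
    with x hdx hx p hp q hq hpu hqu
  exact htw.eq_of_isGSupport hX hg hx (hdx hx) hp hq hpu hqu

end Supports

lemma exists_subseq_forall_tendsto {ι β : Type*} [Countable ι] [TopologicalSpace β]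
    [TopologicalSpace.PseudoMetrizableSpace β] {K : Set β} (hK : IsCompact K)
    {f : ℕ → ι → β} (hf : ∀ k i, f k i ∈ K) :
    ∃ φ : ℕ → ℕ, StrictMono φ ∧ ∃ b : ι → β, ∀ i, Tendsto (fun k => f (φ k) i) atTop (𝓝 (b i)) := by
  obtain ⟨b, -, φ, hφ, hb⟩ :=
    (isCompact_univ_pi fun _ : ι => hK).tendsto_subseq fun k => mem_univ_pi.2 (hf k)
  exact ⟨φ, hφ, b, tendsto_pi_nhds.1 hb⟩

theorem exists_subseq_tendsto_of_equicontinuous {α : Type*} [PseudoMetricSpace α]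
    [TopologicalSpace.SeparableSpace α] {X : Set α} {F : ℕ → α → ℝ} {M : ℝ}
    (hM : ∀ k, ∀ x ∈ X, ‖F k x‖ ≤ M)
    (hF : ∀ ε > 0, ∃ δ > 0, ∀ k, ∀ x ∈ X, ∀ x' ∈ X, dist x x' < δ → dist (F k x) (F k x') < ε) :
    ∃ φ : ℕ → ℕ, StrictMono φ ∧ ∀ x ∈ X, ∃ L, Tendsto (fun k => F (φ k) x) atTop (𝓝 L) := by
  obtain ⟨D, hDX, hDc, hXD⟩ :=
    (TopologicalSpace.IsSeparable.of_separableSpace X).exists_countable_dense_subset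
  have := hDc.to_subtype
  obtain ⟨φ, hφ, b, hb⟩ := exists_subseq_forall_tendsto (isCompact_closedBall (0 : ℝ) M)
    (f := fun k (d : D) => F k d) fun k d => mem_closedBall_zero_iff.2 (hM k d (hDX d.2))
  refine ⟨φ, hφ, fun x hx => cauchySeq_tendsto_of_complete (Metric.cauchySeq_iff'.2 ?_)⟩
  intro ε hε
  obtain ⟨δ, hδ, hFδ⟩ := hF (ε / 3) (by positivity)
  obtain ⟨d, hdD, hxd⟩ := Metric.mem_closure_iff.1 (hXD hx) δ hδ
  obtain ⟨N, hN⟩ := Metric.cauchySeq_iff'.1 (hb ⟨d, hdD⟩).cauchySeq (ε / 3) (by positivity)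
  refine ⟨N, fun n hn => ?_⟩
  calc dist (F (φ n) x) (F (φ N) x)
      ≤ dist (F (φ n) x) (F (φ n) d) + dist (F (φ n) d) (F (φ N) d)
          + dist (F (φ N) d) (F (φ N) x) := dist_triangle4 _ _ _ _
    _ < ε / 3 + ε / 3 + ε / 3 := by
        gcongr
        · exact hFδ _ x hx d (hDX hdD) hxd
        · exact hN n hn
        · exact hFδ _ d (hDX hdD) x hx (by rwa [dist_comm])
    _ = ε := by ring

lemma IsCompact.exists_forall_dist_slice_lt {V P : Type*} [PseudoMetricSpace V]
    [PseudoMetricSpace P] {K : Set V} {W : Set P} {g : V × P → ℝ} (hK : IsCompact (K ×ˢ W))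
    (hg : ContinuousOn g (K ×ˢ W)) {ε : ℝ} (hε : 0 < ε) :
    ∃ δ > 0, ∀ p ∈ W, ∀ x ∈ K, ∀ x' ∈ K, dist x x' < δ → dist (g (x, p)) (g (x', p)) < ε := by
  obtain ⟨δ, hδ, hgδ⟩ := Metric.uniformContinuousOn_iff.1
    (hK.uniformContinuousOn_of_continuous hg) ε hε
  refine ⟨δ, hδ, fun p hp x hx x' hx' hxx' => hgδ _ ⟨hx, hp⟩ _ ⟨hx', hp⟩ ?_⟩
  simpa [Prod.dist_eq] using hxx'

lemma IsCompact.tendsto_integral_comp {V P : Type*} [TopologicalSpace V] [MeasurableSpace V]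
    [TopologicalSpace P] [MeasurableSpace P] [OpensMeasurableSpace (V × P)] [T2Space (V × P)]
    {μ : Measure V} [IsFiniteMeasure μ] {K : Set (V × P)} (hK : IsCompact K) {f : V × P → ℝ}
    (hf : ContinuousOn f K) {ξ : ℕ → V → P} {η : V → P} (hξm : ∀ k, AEMeasurable (ξ k) μ)
    (hξK : ∀ᵐ x ∂μ, ∀ k, (x, ξ k x) ∈ K) (hηK : ∀ᵐ x ∂μ, (x, η x) ∈ K)
    (hlim : ∀ᵐ x ∂μ, Tendsto (fun k => ξ k x) atTop (𝓝 (η x))) :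
    Tendsto (fun k => ∫ x, f (x, ξ k x) ∂μ) atTop (𝓝 (∫ x, f (x, η x) ∂μ)) := by
  obtain ⟨M, hM⟩ := hK.exists_bound_of_continuousOn hf
  refine tendsto_integral_of_dominated_convergence (fun _ => M) (fun k => ?_)
    (integrable_const M) (fun k => ?_) ?_
  · refine (hf.aemeasurable_comp hK.measurableSet (aemeasurable_id.prodMk (hξm k))
      ?_).aestronglyMeasurable
    filter_upwards [hξK] with x hx using hx k
  · filter_upwards [hξK] with x hx using hM _ (hx k)
  · filter_upwards [hξK, hηK, hlim] with x hx hxη hxlim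
    exact (hf _ hxη).tendsto.comp (tendsto_nhdsWithin_iff.2
      ⟨tendsto_const_nhds.prodMk_nhds hxlim, Eventually.of_forall hx⟩)

section Contracts

variable {V P : Type*} {X : Set V} {W : Set P} {g : V × P → ℝ} {p₀ : P}

/-- Agent `x` buys `ξ x`; in the paper's terms `ξ x = (y x, H(x, y x, u x))` and
`u = g (·, ξ ·)`. -/
structure IsContract (g : V × P → ℝ) (X : Set V) (W : Set P) (p₀ : P) (ξ : V → P) : Prop where
  mapsTo : MapsTo ξ X W
  incentive : ∀ x ∈ X, ∀ x' ∈ X, g (x', ξ x) ≤ g (x', ξ x')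
  participation : ∀ x ∈ X, g (x, p₀) ≤ g (x, ξ x)

lemma isContract_const (hp₀ : p₀ ∈ W) : IsContract g X W p₀ fun _ => p₀ :=
  ⟨fun _ _ => hp₀, fun _ _ _ _ => le_rfl, fun _ _ => le_rfl⟩

lemma isContract_of_isGSupport {u : V → ℝ} {ξ : V → P}
    (hξ : ∀ x ∈ X, ξ x ∈ W ∧ IsGSupport g X u x (ξ x)) (hp₀ : ∀ x ∈ X, g (x, p₀) ≤ u x) :
    IsContract g X W p₀ ξ where
  mapsTo x hx := (hξ x hx).1
  incentive x hx x' hx' := (hξ x' hx').2.1 ▸ (hξ x hx).2.2 x' hx'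
  participation x hx := (hξ x hx).2.1 ▸ hp₀ x hx

namespace IsContract

variable {ξ : V → P}

lemma isGSupport (h : IsContract g X W p₀ ξ) {x : V} (hx : x ∈ X) :
    IsGSupport g X (fun x => g (x, ξ x)) x (ξ x) :=
  ⟨rfl, h.incentive x hx⟩

lemma dist_lt [PseudoMetricSpace V] (h : IsContract g X W p₀ ξ) {x x' : V} (hx : x ∈ X)
    (hx' : x' ∈ X) {ε : ℝ} (hε : ∀ p ∈ W, dist (g (x, p)) (g (x', p)) < ε) :
    dist (g (x, ξ x)) (g (x', ξ x')) < ε := by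
  have h₁ := abs_lt.1 (hε _ (h.mapsTo hx))
  have h₂ := abs_lt.1 (hε _ (h.mapsTo hx'))
  rw [Real.dist_eq, abs_sub_lt_iff]
  constructor <;> linarith [h.incentive x hx x' hx', h.incentive x' hx' x hx, h₁.2, h₂.1]

end IsContract

lemma isGSupport_of_tendsto [TopologicalSpace V] [TopologicalSpace P]
    (hg : ContinuousOn g (X ×ˢ W)) {ξ : ℕ → V → P}
    (hξ : ∀ k, IsContract g X W p₀ (ξ k)) {u : V → ℝ}
    (hu : ∀ x ∈ X, Tendsto (fun k => g (x, ξ k x)) atTop (𝓝 (u x))) {x : V} (hx : x ∈ X)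
    {p : P} (hpW : p ∈ W) (hp : Tendsto (fun k => ξ k x) atTop (𝓝 p)) :
    IsGSupport g X u x p := by
  have hlim : ∀ x' ∈ X, Tendsto (fun k => g (x', ξ k x)) atTop (𝓝 (g (x', p))) :=
    fun x' hx' => (hg _ ⟨hx', hpW⟩).tendsto.comp (tendsto_nhdsWithin_iff.2
      ⟨tendsto_const_nhds.prodMk_nhds hp, Eventually.of_forall fun k => ⟨hx', (hξ k).mapsTo hx⟩⟩)
  exact ⟨tendsto_nhds_unique (hlim x hx) (hu x hx), fun x' hx' =>
    le_of_tendsto_of_tendsto' (hlim x' hx') (hu x' hx') fun k => (hξ k).incentive x hx x' hx'⟩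

variable [NormedAddCommGroup V] [NormedSpace ℝ V] [NormedAddCommGroup P] [NormedSpace ℝ P]

theorem IsTwisted.exists_subseq_tendsto_ae [FiniteDimensional ℝ V] [MeasurableSpace V]
    [BorelSpace V] {μ : Measure V} [μ.IsAddHaarMeasure] (htw : IsTwisted g X W)
    (hX : IsOpen X) (hXb : Bornology.IsBounded X) (hW : IsCompact W)
    (hg : ContDiffOn ℝ 1 g (closure X ×ˢ W)) {ξ : ℕ → V → P}
    (hξ : ∀ k, IsContract g X W p₀ (ξ k)) :
    ∃ φ : ℕ → ℕ, StrictMono φ ∧ ∃ η : V → P, IsContract g X W p₀ η ∧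
      ∀ᵐ x ∂μ, x ∈ X → Tendsto (fun k => ξ (φ k) x) atTop (𝓝 (η x)) := by
  have hK : IsCompact (closure X ×ˢ W) := hXb.isCompact_closure.prod hW
  have hXW : X ×ˢ W ⊆ closure X ×ˢ W := prod_mono subset_closure subset_rfl
  have hgX : ContinuousOn g (X ×ˢ W) := hg.continuousOn.mono hXW
  obtain ⟨M, hM⟩ := hK.exists_bound_of_continuousOn hg.continuousOn
  obtain ⟨φ, hφ, hconv⟩ := exists_subseq_tendsto_of_equicontinuous (X := X)
    (F := fun k x => g (x, ξ k x)) (fun k x hx => hM _ ⟨subset_closure hx, (hξ k).mapsTo hx⟩)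
    fun ε hε => by
      obtain ⟨δ, hδ, hgδ⟩ := hK.exists_forall_dist_slice_lt hg.continuousOn hε
      exact ⟨δ, hδ, fun k x hx x' hx' hxx' => (hξ k).dist_lt hx hx' fun p hp =>
        hgδ p hp x (subset_closure hx) x' (subset_closure hx') hxx'⟩
  choose! u hu using hconv
  have hsupp : ∀ x ∈ X, ∀ p ∈ W, MapClusterPt p atTop (fun k => ξ (φ k) x) →
      IsGSupport g X u x p := by
    intro x hx p hpW hp
    obtain ⟨ψ, hψ, hψlim⟩ := hp.tendsto_subseq
    exact isGSupport_of_tendsto hgX (ξ := fun k => ξ (φ (ψ k))) (fun k => hξ _)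
      (fun x' hx' => (hu x' hx').comp hψ.tendsto_atTop) hx hpW hψlim
  have hcl : ∀ x ∈ X, ∃ p ∈ W, MapClusterPt p atTop (fun k => ξ (φ k) x) := fun x hx =>
    hW.exists_mapClusterPt_of_frequently (Frequently.of_forall fun k => (hξ _).mapsTo hx)
  choose! η hηW hηcl using hcl
  have hη : ∀ x ∈ X, IsGSupport g X u x (η x) := fun x hx => hsupp x hx _ (hηW x hx) (hηcl x hx)
  refine ⟨φ, hφ, η, isContract_of_isGSupport (fun x hx => ⟨hηW x hx, hη x hx⟩)
    fun x hx => ge_of_tendsto' (hu x hx) fun k => (hξ _).participation x hx, ?_⟩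
  filter_upwards [htw.ae_eq_of_isGSupport hX hW (hg.mono hXW)
    fun x hx => ⟨η x, hηW x hx, hη x hx⟩] with x huniq hx
  exact hW.tendsto_nhds_of_unique_mapClusterPt (Eventually.of_forall fun k => (hξ _).mapsTo hx)
    fun p hpW hp => huniq hx p hpW _ (hηW x hx) (hsupp x hx p hpW hp) (hη x hx)

end Contracts

theorem IsTwisted.exists_isContract_forall_integral_le {V P : Type*} [NormedAddCommGroup V]
    [NormedSpace ℝ V] [FiniteDimensional ℝ V] [MeasurableSpace V] [BorelSpace V]
    [NormedAddCommGroup P] [NormedSpace ℝ P] [MeasurableSpace P] [BorelSpace P]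
    [SecondCountableTopology P] {X : Set V} {W : Set P} {g f : V × P → ℝ} {p₀ : P}
    (htw : IsTwisted g X W) (hX : IsOpen X) (hXb : Bornology.IsBounded X) (hW : IsCompact W)
    (hg : ContDiffOn ℝ 1 g (closure X ×ˢ W)) (hp₀ : p₀ ∈ W)
    (hf : ContinuousOn f (closure X ×ˢ W)) {ν μ : Measure V} [ν.IsAddHaarMeasure]
    [IsFiniteMeasure μ] (hμν : μ ≪ ν) (hμX : ∀ᵐ x ∂μ, x ∈ X) :
    ∃ ξ : V → P, (IsContract g X W p₀ ξ ∧ AEMeasurable ξ μ) ∧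
      ∀ ξ' : V → P, IsContract g X W p₀ ξ' → AEMeasurable ξ' μ →
        ∫ x, f (x, ξ' x) ∂μ ≤ ∫ x, f (x, ξ x) ∂μ := by
  set A := {ξ : V → P | IsContract g X W p₀ ξ ∧ AEMeasurable ξ μ}
  set value := fun ξ : V → P => ∫ x, f (x, ξ x) ∂μ
  have hK : IsCompact (closure X ×ˢ W) := hXb.isCompact_closure.prod hW
  have hmem : ∀ ξ ∈ A, ∀ᵐ x ∂μ, (x, ξ x) ∈ closure X ×ˢ W := fun ξ hξ => by
    filter_upwards [hμX] with x hx using ⟨subset_closure hx, hξ.1.mapsTo hx⟩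
  obtain ⟨M, hM⟩ := hK.exists_bound_of_continuousOn hf
  have hbdd : BddAbove (value '' A) := by
    refine ⟨M * μ.real univ, ?_⟩
    rintro _ ⟨ξ, hξ, rfl⟩
    refine (Real.le_norm_self (value ξ)).trans (norm_integral_le_of_norm_le_const ?_)
    filter_upwards [hmem ξ hξ] with x hx using hM _ hx
  obtain ⟨v, -, hv, hvA⟩ :=
    exists_seq_tendsto_sSup (S := value '' A)
      ⟨_, fun _ => p₀, ⟨isContract_const hp₀, aemeasurable_const⟩, rfl⟩ hbdd
  choose ξ hξA hξv using hvA
  obtain ⟨φ, hφ, η, hη, hlim⟩ :=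
    htw.exists_subseq_tendsto_ae (μ := ν) hX hXb hW hg fun k => (hξA k).1
  have hlimμ : ∀ᵐ x ∂μ, Tendsto (fun k => ξ (φ k) x) atTop (𝓝 (η x)) := by
    filter_upwards [hμν.ae_le hlim, hμX] with x hx hxX using hx hxX
  have hηA : η ∈ A :=
    ⟨hη, aemeasurable_of_tendsto_metrizable_ae atTop (fun k => (hξA (φ k)).2) hlimμ⟩
  have hvalue : value η = sSup (value '' A) := by
    refine tendsto_nhds_unique ?_ (hv.comp hφ.tendsto_atTop)
    refine (hK.tendsto_integral_comp hf (fun k => (hξA (φ k)).2) ?_ (hmem η hηA) hlimμ).congr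
      fun k => hξv (φ k)
    exact ae_all_iff.2 fun k => hmem _ (hξA (φ k))
  refine ⟨η, hηA, fun ξ' hξ' hξ'm => ?_⟩
  change value ξ' ≤ value η
  exact hvalue ▸ le_csSup hbdd ⟨ξ', ⟨hξ', hξ'm⟩, rfl⟩

namespace PrincipalAgent

variable {m n : ℕ} {X : Set (E m)} {Y : Set (E n)} {Z : Set ℝ} {G : E m → E n → ℝ → ℝ}
  {u : E m → ℝ}

abbrev uncurryG (G : E m → E n → ℝ → ℝ) : E m × (E n × ℝ) → ℝ := fun q => G q.1 q.2.1 q.2.2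

lemma CondG0.contDiffOn (hG0 : CondG0 X Y Z G) :
    ContDiffOn ℝ 1 (uncurryG G) (X ×ˢ (closure Y ×ˢ closure Z)) :=
  hG0.mono (prod_mono subset_closure subset_rfl)

lemma CondG1.isTwisted (hG1 : CondG1 X Y Z G) :
    IsTwisted (uncurryG G) X (closure Y ×ˢ closure Z) := by
  intro x hx p hp q hq hpq
  obtain ⟨hd, hv⟩ := Prod.mk.inj hpq
  refine (hG1 x hx).2.1 hp hq ?_
  simp only [Phi, Gx, gradient]
  exact Prod.ext (congrArg _ hd :) hv

lemma CondG4.strictAntiOn (hG4 : CondG4 X Y Z G) (hG0 : CondG0 X Y Z G)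
    (hZ : Convex ℝ (closure Z)) {x : E m} (hx : x ∈ X) {y : E n} (hy : y ∈ closure Y) :
    StrictAntiOn (G x y) (closure Z) := by
  refine strictAntiOn_of_deriv_neg hZ ?_ fun z hz => hG4 x hx y hy z (interior_subset hz)
  exact hG0.continuousOn.comp (f := fun z => (x, y, z)) (by fun_prop)
    fun z hz => ⟨subset_closure hx, hy, hz⟩

namespace GConvex

lemma exists_isGSupport (hu : GConvex X Y Z G u) :
    ∀ x ∈ X, ∃ p ∈ closure Y ×ˢ closure Z, IsGSupport (uncurryG G) X u x p := by
  intro x hx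
  obtain ⟨y, hy, z, hz, he, hs⟩ := hu x hx
  exact ⟨(y, z), ⟨hy, hz⟩, he.symm, hs⟩

lemma locallyLipschitzOn (hu : GConvex X Y Z G u) (hX : IsOpen X)
    (hW : IsCompact (closure Y ×ˢ closure Z)) (hG0 : CondG0 X Y Z G) :
    LocallyLipschitzOn X u :=
  locallyLipschitzOn_of_forall_isGSupport hX hW hG0.contDiffOn hu.exists_isGSupport

theorem exists_aemeasurable_price {a b : ℝ} (hu : GConvex X Y Z G u) (hX : IsOpen X)
    (hYb : Bornology.IsBounded Y) (hZ : closure Z = Icc a b) (hG0 : CondG0 X Y Z G)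
    (hG4 : CondG4 X Y Z G) {μ : Measure (E m)} (hμX : ∀ᵐ x ∂μ, x ∈ X) {y : E m → E n}
    (hy : ∀ x ∈ X, y x ∈ GSubdiff X Y Z G u x) (hym : AEMeasurable y μ) :
    ∃ z : E m → ℝ, AEMeasurable z μ ∧
      ∀ x ∈ X, z x ∈ closure Z ∧ IsGSupport (uncurryG G) X u x (y x, z x) := by
  have hW : IsCompact (closure Y ×ˢ closure Z) :=
    hYb.isCompact_closure.prod (hZ ▸ isCompact_Icc)
  choose! z hzZ hz using fun x hx => (hy x hx).2
  refine ⟨z, aemeasurable_of_strictAntiOn_eq (a := a) (b := b) (F := fun x => G x (y x))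
    (v := u) (fun c hc => ?_) ?_ ?_, fun x hx => ⟨hzZ x hx, hz x hx⟩⟩
  · refine hG0.continuousOn.aemeasurable_comp
      (isClosed_closure.prod (isClosed_closure.prod isClosed_closure)).measurableSet
      (aemeasurable_id.prodMk (hym.prodMk aemeasurable_const)) ?_
    filter_upwards [hμX] with x hx using ⟨subset_closure hx, (hy x hx).1, hZ ▸ hc⟩
  · have hu' := (hu.locallyLipschitzOn hX hW hG0).continuousOn.aemeasurable
      hX.measurableSet (μ := μ)
    rwa [Measure.restrict_eq_self_of_ae_mem hμX] at hu'
  · filter_upwards [hμX] with x hx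
    exact ⟨hZ ▸ hG4.strictAntiOn hG0 (hZ ▸ convex_Icc a b) hx (hy x hx).1, hZ ▸ hzZ x hx,
      (hz x hx).1⟩

theorem ae_eq_of_mem_GSubdiff (hu : GConvex X Y Z G u) (hX : IsOpen X)
    (hW : IsCompact (closure Y ×ˢ closure Z)) (hG0 : CondG0 X Y Z G) (hG1 : CondG1 X Y Z G)
    {y₁ y₂ : E m → E n} (hy₁ : ∀ x ∈ X, y₁ x ∈ GSubdiff X Y Z G u x)
    (hy₂ : ∀ x ∈ X, y₂ x ∈ GSubdiff X Y Z G u x) :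
    ∀ᵐ x ∂(volume : Measure (E m)).restrict X, y₁ x = y₂ x := by
  filter_upwards [ae_restrict_mem hX.measurableSet, ae_restrict_of_ae
    (hG1.isTwisted.ae_eq_of_isGSupport hX hW hG0.contDiffOn hu.exists_isGSupport)]
    with x hx huniq
  obtain ⟨hy₁Y, z₁, hz₁, h₁⟩ := hy₁ x hx
  obtain ⟨hy₂Y, z₂, hz₂, h₂⟩ := hy₂ x hx
  exact congrArg Prod.fst (huniq hx (y₁ x, z₁) ⟨hy₁Y, hz₁⟩ (y₂ x, z₂) ⟨hy₂Y, hz₂⟩ h₁ h₂)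

end GConvex

lemma mem_GSubdiff_of_isContract {p₀ : E n × ℝ} {ξ : E m → E n × ℝ}
    (h : IsContract (uncurryG G) X (closure Y ×ˢ closure Z) p₀ ξ) {x : E m}
    (hx : x ∈ X) : (ξ x).1 ∈ GSubdiff X Y Z G (fun x => G x (ξ x).1 (ξ x).2) x :=
  ⟨(h.mapsTo hx).1, (ξ x).2, (h.mapsTo hx).2, h.isGSupport hx⟩

lemma gConvex_of_isContract {p₀ : E n × ℝ} {ξ : E m → E n × ℝ}
    (h : IsContract (uncurryG G) X (closure Y ×ˢ closure Z) p₀ ξ) :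
    GConvex X Y Z G fun x => G x (ξ x).1 (ξ x).2 :=
  fun x hx => ⟨(ξ x).1, (h.mapsTo hx).1, (ξ x).2, (h.mapsTo hx).2, rfl, h.incentive x hx⟩

lemma setIntegral_H_eq_integral {π H : E m → E n → ℝ → ℝ}
    (hH : ∀ x ∈ X, ∀ y ∈ closure Y, ∀ z ∈ closure Z, H x y (G x y z) = z) {μ : Measure (E m)}
    (hμX : ∀ᵐ x ∂μ, x ∈ X) {y : E m → E n} {z : E m → ℝ}
    (h : ∀ x ∈ X, y x ∈ closure Y ∧ z x ∈ closure Z ∧ G x (y x) (z x) = u x) :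
    ∫ x in X, π x (y x) (H x (y x) (u x)) ∂μ = ∫ x, π x (y x) (z x) ∂μ := by
  rw [Measure.restrict_eq_self_of_ae_mem hμX]
  refine integral_congr_ae ?_
  filter_upwards [hμX] with x hx
  obtain ⟨hy, hz, hu⟩ := h x hx
  rw [← hu, hH x hx _ hy _ hz]

theorem principal_program_maximum_attained_general
    {m n : ℕ} (X : Set (E m)) (Y : Set (E n)) (zl zu : ℝ)
    (hzz : zl < zu) (Z : Set ℝ) (hZ : Z = Ioo zl zu)
    (hXo : IsOpen X) (hXb : Bornology.IsBounded X)
    (hYb : Bornology.IsBounded Y)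
    (G π H : E m → E n → ℝ → ℝ)
    (hH : ∀ x ∈ X, ∀ y ∈ closure Y, ∀ z ∈ closure Z, H x y (G x y z) = z)
    (hG0 : CondG0 X Y Z G) (hG1 : CondG1 X Y Z G) (hG4 : CondG4 X Y Z G)
    (y0 : E n) (z0 : ℝ)
    (hG5 : ContinuousOn (fun p : E m × E n × ℝ => π p.1 p.2.1 p.2.2)
        (closure X ×ˢ (closure Y ×ˢ closure Z)) ∧
      y0 ∈ closure Y ∧ z0 ∈ closure Z ∧
      ∀ x ∈ X, ∀ y ∈ closure Y, G x y zu ≤ G x y0 z0)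
    (μ : Measure (E m)) (hμ : AdmissibleMeasure X μ) :
    (∃ u : E m → ℝ, ∃ ysel : E m → E n,
      (GConvex X Y Z G u ∧ (∀ x ∈ X, G x y0 z0 ≤ u x) ∧
        (∀ x ∈ X, ysel x ∈ GSubdiff X Y Z G u x) ∧ AEMeasurable ysel μ) ∧
      ∀ u' : E m → ℝ, ∀ ysel' : E m → E n,
        GConvex X Y Z G u' → (∀ x ∈ X, G x y0 z0 ≤ u' x) →
        (∀ x ∈ X, ysel' x ∈ GSubdiff X Y Z G u' x) → AEMeasurable ysel' μ →
        (∫ x in X, π x (ysel' x) (H x (ysel' x) (u' x)) ∂μ) ≤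
          ∫ x in X, π x (ysel x) (H x (ysel x) (u x)) ∂μ) ∧
    (∀ u : E m → ℝ, GConvex X Y Z G u →
      ∀ y₁ y₂ : E m → E n,
        (∀ x ∈ X, y₁ x ∈ GSubdiff X Y Z G u x) →
        (∀ x ∈ X, y₂ x ∈ GSubdiff X Y Z G u x) →
        ∀ᵐ x ∂((volume : Measure (E m)).restrict X), y₁ x = y₂ x) := by
  obtain ⟨hμprob, hμvol, hμXc⟩ := hμ
  have hμX : ∀ᵐ x ∂μ, x ∈ X := ae_iff.2 hμXc
  have hclZ : closure Z = Icc zl zu := hZ ▸ closure_Ioo hzz.ne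
  have hW : IsCompact (closure Y ×ˢ closure Z) :=
    hYb.isCompact_closure.prod (hclZ ▸ isCompact_Icc)
  obtain ⟨ξ, ⟨hξ, hξm⟩, hmax⟩ := hG1.isTwisted.exists_isContract_forall_integral_le
    (ν := volume) (f := uncurryG π) (p₀ := (y0, z0)) hXo hXb hW hG0 ⟨hG5.2.1, hG5.2.2.1⟩ hG5.1
    hμvol hμX
  refine ⟨⟨fun x => G x (ξ x).1 (ξ x).2, fun x => (ξ x).1,
    ⟨gConvex_of_isContract hξ, hξ.participation, fun x hx => mem_GSubdiff_of_isContract hξ hx,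
      hξm.fst⟩,
    fun u' y' hu' hu'₀ hy' hy'm => ?_⟩,
    fun u hu y₁ y₂ hy₁ hy₂ => hu.ae_eq_of_mem_GSubdiff hXo hW hG0 hG1 hy₁ hy₂⟩
  obtain ⟨z', hz'm, hz'⟩ := hu'.exists_aemeasurable_price hXo hYb hclZ hG0 hG4 hμX hy' hy'm
  have hle := hmax (fun x => (y' x, z' x))
    (isContract_of_isGSupport (fun x hx => ⟨⟨(hy' x hx).1, (hz' x hx).1⟩, (hz' x hx).2⟩) hu'₀)
    (hy'm.prodMk hz'm)
  rwa [setIntegral_H_eq_integral hH hμX fun x hx => ⟨(hy' x hx).1, (hz' x hx).1, (hz' x hx).2.1⟩,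
    setIntegral_H_eq_integral hH hμX fun x hx => ⟨(hξ.mapsTo hx).1, (hξ.mapsTo hx).2, rfl⟩]

/-- Theorem 3.9: assume (G0), (G1), (G4), (G5), `z̄ < +∞` and
`μ ≪ L^m`.  With `Π̃(u,y) := ∫_X π(x, y(x), H(x, y(x), u(x))) dμ(x)`, the
maximum of `Π̃` over all `G`-convex `u ≥ u_∅` and all measurable selections
`y(x) ∈ ∂^G u(x)` is attained; moreover, for each such `u` the selection `y` is
uniquely determined at Lebesgue-almost every point of `X`.  (Since `z̄ < ∞`,
`G(x,y,z̄)` in (G5) is just the continuous extension evaluated at `z̄`.) -/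
theorem principal_program_maximum_attained
    {m n : ℕ} (X : Set (E m)) (Y : Set (E n)) (zl zu : ℝ)
    (hzz : zl < zu) (Z : Set ℝ) (hZ : Z = Ioo zl zu)
    (hXo : IsOpen X) (hXb : Bornology.IsBounded X)
    (hYo : IsOpen Y) (hYb : Bornology.IsBounded Y)
    (G π H : E m → E n → ℝ → ℝ)
    (hH : ∀ x ∈ X, ∀ y ∈ closure Y, ∀ z ∈ closure Z, H x y (G x y z) = z)
    (hG0 : CondG0 X Y Z G) (hG1 : CondG1 X Y Z G) (hG4 : CondG4 X Y Z G)
    (y0 : E n) (z0 : ℝ)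
    (hG5 : ContinuousOn (fun p : E m × E n × ℝ => π p.1 p.2.1 p.2.2)
        (closure X ×ˢ (closure Y ×ˢ closure Z)) ∧
      y0 ∈ closure Y ∧ z0 ∈ closure Z ∧
      ∀ x ∈ X, ∀ y ∈ closure Y, G x y zu ≤ G x y0 z0)
    (μ : Measure (E m)) (hμ : AdmissibleMeasure X μ) :
    (∃ u : E m → ℝ, ∃ ysel : E m → E n,
      (GConvex X Y Z G u ∧ (∀ x ∈ X, G x y0 z0 ≤ u x) ∧
        (∀ x ∈ X, ysel x ∈ GSubdiff X Y Z G u x) ∧ AEMeasurable ysel μ) ∧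
      ∀ u' : E m → ℝ, ∀ ysel' : E m → E n,
        GConvex X Y Z G u' → (∀ x ∈ X, G x y0 z0 ≤ u' x) →
        (∀ x ∈ X, ysel' x ∈ GSubdiff X Y Z G u' x) → AEMeasurable ysel' μ →
        (∫ x in X, π x (ysel' x) (H x (ysel' x) (u' x)) ∂μ) ≤
          ∫ x in X, π x (ysel x) (H x (ysel x) (u x)) ∂μ) ∧
    (∀ u : E m → ℝ, GConvex X Y Z G u →
      ∀ y₁ y₂ : E m → E n,
        (∀ x ∈ X, y₁ x ∈ GSubdiff X Y Z G u x) →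
        (∀ x ∈ X, y₂ x ∈ GSubdiff X Y Z G u x) →
        ∀ᵐ x ∂((volume : Measure (E m)).restrict X), y₁ x = y₂ x) :=
  principal_program_maximum_attained_general X Y zl zu hzz Z hZ hXo hXb hYb G π H hH hG0 hG1 hG4 y0
    z0 hG5 μ hμ

end PrincipalAgent
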